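/- arXiv:2108.06519 — 4 statements merged into one kernel-verified Lean document; each statement's English description precedes it below -/
import Mathlib

section
/- For a contact Hamiltonian vector field X_H on a (2n+1)-dimensional contact manifold (M, η), the volume form satisfies L_{X_H}(η ∧ (dη)^n) = −(n+1) R(H) · (η ∧ (dη)^n). Consequently, if H is nowhere vanishing, the quantity H^{−(n+1)} η ∧ (dη)^n is preserved: L_{X_H}(H^{−(n+1)} η ∧ (dη)^n) = 0. -/
noncomputable section

/-- The model space ℝ^{2n+1} with coordinates (qⁱ, pᵢ, z). -/
abbrev Pt (n : ℕ) := (Fin n → ℝ) × (Fin n → ℝ) × ℝ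

/-- basis vectors ∂/∂qⁱ, ∂/∂pᵢ, ∂/∂z -/
def bq (n : ℕ) (i : Fin n) : Pt n := (Pi.single i 1, 0, 0)
def bp (n : ℕ) (i : Fin n) : Pt n := (0, Pi.single i 1, 0)
def bz (n : ℕ) : Pt n := (0, 0, 1)

/-- η = dz − Σᵢ pᵢ dqⁱ at x, evaluated on v. -/
def etaD (n : ℕ) (x v : Pt n) : ℝ := v.2.2 - ∑ i, x.2.1 i * v.1 i

/-- dη = Σᵢ dqⁱ ∧ dpᵢ, evaluated on (v, w). -/
def dEtaD (n : ℕ) (v w : Pt n) : ℝ := ∑ i, (v.1 i * w.2.1 i - w.1 i * v.2.1 i)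

/-- The divergence of a vector field X on ℝ^{2n+1} (with respect to the standard volume). -/
def divD (n : ℕ) (X : Pt n → Pt n) (x : Pt n) : ℝ :=
  (∑ i, (fderiv ℝ X x (bq n i)).1 i) + (∑ i, (fderiv ℝ X x (bp n i)).2.1 i) +
    (fderiv ℝ X x (bz n)).2.2

/-- for the contact Hamiltonian vector field X = X_H in Darboux coordinates,
L_{X_H}(η ∧ (dη)^n) = −(n+1) R(H) · (η ∧ (dη)^n), and if H is nowhere vanishing then
L_{X_H}(H^{−(n+1)} η ∧ (dη)^n) = 0.  Since η ∧ (dη)^n is a constant (n!) multiple of the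
standard volume form in Darboux coordinates and the Lie derivative of a top form g·vol
along X is (X(g) + g·div X)·vol, these identities read: div X = −(n+1)·∂H/∂z, and
X(H^{−(n+1)}) + H^{−(n+1)}·div X = 0. -/
theorem lie_derivative_of_contact_volume (n : ℕ) (H : Pt n → ℝ) (hH : ContDiff ℝ (⊤ : ℕ∞) H)
    (X : Pt n → Pt n)
    (hX1 : ∀ x, etaD n x (X x) = -H x)
    (hX2 : ∀ x v, dEtaD n (X x) v = fderiv ℝ H x v - fderiv ℝ H x (bz n) * etaD n x v) :
    (∀ x, divD n X x = -((n : ℝ) + 1) * fderiv ℝ H x (bz n)) ∧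
    ((∀ x, H x ≠ 0) → ∀ x,
      fderiv ℝ (fun y => H y ^ (-(n + 1) : ℤ)) x (X x)
        + H x ^ (-(n + 1) : ℤ) * divD n X x = 0) := by
  classical
  set f' : Pt n → (Pt n →L[ℝ] ℝ) := fderiv ℝ H with hf'def
  have hHd : Differentiable ℝ H := hH.differentiable (by simp)
  have hf'c : ContDiff ℝ (⊤ : ℕ∞) f' := hH.fderiv_right (by simp)
  have hf'd : Differentiable ℝ f' := hf'c.differentiable (by simp)
  have hHfd : ∀ y, HasFDerivAt H (f' y) y := fun y => (hHd y).hasFDerivAt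
  -- component formulas for X
  have hXq : ∀ x i, (X x).1 i = f' x (bp n i) := by
    intro x i
    have h := hX2 x (bp n i)
    simp [dEtaD, etaD, bp, Pi.single_apply, mul_ite, Finset.sum_ite_eq'] at h ⊢
    linarith
  have hXp : ∀ x i, (X x).2.1 i = -(f' x (bq n i)) - x.2.1 i * f' x (bz n) := by
    intro x i
    have h := hX2 x (bq n i)
    simp [dEtaD, etaD, bq, Pi.single_apply, mul_ite, ite_mul, Finset.sum_ite_eq'] at h ⊢
    linarith
  have hXz : ∀ x, (X x).2.2 = (∑ j, x.2.1 j * f' x (bp n j)) - H x := by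
    intro x
    have h := hX1 x
    simp only [etaD] at h
    simp only [hXq] at h
    linarith
  have hXeq : X = fun x => (fun i => f' x (bp n i),
      fun i => -(f' x (bq n i)) - x.2.1 i * f' x (bz n),
      (∑ j, x.2.1 j * f' x (bp n j)) - H x) := by
    funext x
    exact Prod.ext (funext (hXq x)) (Prod.ext (funext (hXp x)) (hXz x))
  have hXH : ∀ x, f' x (X x) = -(f' x (bz n) * H x) := by
    intro x
    have h := hX2 x (X x)
    rw [hX1 x] at h
    simp [dEtaD] at h
    linarith
  have hdiv : ∀ x, divD n X x = -((n : ℝ) + 1) * f' x (bz n) := by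
    intro x
    have hf'fd : HasFDerivAt f' (fderiv ℝ f' x) x := (hf'd x).hasFDerivAt
    set F2 : Pt n →L[ℝ] (Pt n →L[ℝ] ℝ) := fderiv ℝ f' x with hF2def
    have hsymm : ∀ u v, F2 u v = F2 v u :=
      fun u v => second_derivative_symmetric hHfd hf'fd u v
    set Pp : Fin n → (Pt n →L[ℝ] ℝ) := fun i =>
      (ContinuousLinearMap.proj i).comp ((ContinuousLinearMap.fst ℝ (Fin n → ℝ) ℝ).comp
        (ContinuousLinearMap.snd ℝ (Fin n → ℝ) ((Fin n → ℝ) × ℝ))) with hPp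
    have hcoord : ∀ i, HasFDerivAt (fun y : Pt n => y.2.1 i) (Pp i) x := fun i =>
      (Pp i).hasFDerivAt
    have hq : ∀ v : Pt n, HasFDerivAt (fun y => f' y v)
        ((ContinuousLinearMap.apply ℝ ℝ v).comp F2) x := fun v =>
      ((ContinuousLinearMap.apply ℝ ℝ v).hasFDerivAt).comp x hf'fd
    have hXfd : HasFDerivAt X
        ((ContinuousLinearMap.pi fun i => (ContinuousLinearMap.apply ℝ ℝ (bp n i)).comp F2).prod
          ((ContinuousLinearMap.pi fun i =>
              -((ContinuousLinearMap.apply ℝ ℝ (bq n i)).comp F2) -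
                (x.2.1 i • ((ContinuousLinearMap.apply ℝ ℝ (bz n)).comp F2) +
                  f' x (bz n) • Pp i)).prod
            ((∑ j, (x.2.1 j • ((ContinuousLinearMap.apply ℝ ℝ (bp n j)).comp F2) +
                f' x (bp n j) • Pp j)) - f' x))) x := by
      rw [hXeq]
      exact HasFDerivAt.prodMk (hasFDerivAt_pi.2 fun i => hq (bp n i))
        (HasFDerivAt.prodMk (hasFDerivAt_pi.2 fun i => ((hq (bq n i)).neg).sub ((hcoord i).mul (hq (bz n))))
          ((HasFDerivAt.fun_sum (u := Finset.univ) fun j _ => (hcoord j).mul (hq (bp n j))).sub (hHfd x)))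
    have e1 : ∀ i, F2 (bq n i) (bp n i) = F2 (bp n i) (bq n i) := fun i => hsymm _ _
    have e2 : ∀ i, F2 (bp n i) (bz n) = F2 (bz n) (bp n i) := fun i => hsymm _ _
    rw [divD, hXfd.fderiv]
    simp only [ContinuousLinearMap.prod_apply, ContinuousLinearMap.pi_apply,
      ContinuousLinearMap.coe_comp', Function.comp_apply, ContinuousLinearMap.apply_apply,
      ContinuousLinearMap.sub_apply, ContinuousLinearMap.add_apply, ContinuousLinearMap.neg_apply,
      ContinuousLinearMap.smul_apply, ContinuousLinearMap.coe_sum', Finset.sum_apply,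
      smul_eq_mul, hPp, ContinuousLinearMap.coe_fst', ContinuousLinearMap.coe_snd',
      ContinuousLinearMap.proj_apply]
    simp only [e1, e2]
    simp [bq, bp, bz, Pi.single_apply, Finset.sum_sub_distrib, Finset.sum_add_distrib,
      mul_ite, ite_mul, Finset.sum_ite_eq', Finset.sum_const, Finset.card_univ]
    ring
  refine ⟨hdiv, fun hne x => ?_⟩
  have hzp : HasFDerivAt (fun y => H y ^ (-(n+1) : ℤ))
      ((((-(n+1) : ℤ) : ℝ) * H x ^ ((-(n+1) : ℤ)-1)) • f' x) x :=
    (hasDerivAt_zpow (-(n+1)) (H x) (Or.inl (hne x))).comp_hasFDerivAt x (hHfd x)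
  rw [hzp.fderiv, hdiv x]
  have ha : H x ^ ((-(n+1) : ℤ)-1) * H x = H x ^ (-(n+1) : ℤ) := by
    rw [← zpow_add_one₀ (hne x)]
    norm_num
  simp only [ContinuousLinearMap.smul_apply, smul_eq_mul, hXH]
  push_cast
  linear_combination ((n:ℝ)+1) * f' x (bz n) * ha
end
end

section
/- The map β^c : Tℝ^{2n+1} × ℝ → T*ℝ^{2n+1} × ℝ given in coordinates by (qⁱ, pᵢ, z, q̇ⁱ, ṗᵢ, ż, u) ↦ (qⁱ, pᵢ, z, u pᵢ + ṗᵢ, −q̇ⁱ, −u, ż − pᵢ q̇ⁱ) satisfies (β^c)* η_{T*M} = η^T, where η_{T*M} is the canonical contact form on the extended cotangent bundle and η^T = dż + u dz − (ṗᵢ + u pᵢ) dqⁱ − pᵢ dq̇ⁱ is the tangent contact form; in particular β^c is a strict contact diffeomorphism. -/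
noncomputable section

/-- The extended tangent bundle TM × ℝ, coordinates ((q,p,z), (q̇,ṗ,ż), u). -/
abbrev TanExt (n : ℕ) := Pt n × Pt n × ℝ

/-- The extended cotangent bundle T*M × ℝ, coordinates ((q,p,z), (a,b,c), w),
where (a,b,c) are the covector components. -/
abbrev CotExt (n : ℕ) := Pt n × Pt n × ℝ

/-- The tangent contact form η^T = dż + u dz − (ṗᵢ + u pᵢ) dqⁱ − pᵢ dq̇ⁱ at
pt = ((q,p,z),(q̇,ṗ,ż),u), evaluated on a tangent vector v. -/
def etaTan (n : ℕ) (pt v : TanExt n) : ℝ :=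
  v.2.1.2.2 + pt.2.2 * v.1.2.2
    - (∑ i, (pt.2.1.2.1 i + pt.2.2 * pt.1.2.1 i) * v.1.1 i)
    - (∑ i, pt.1.2.1 i * v.2.1.1 i)

/-- The canonical contact form dw − aᵢ dqⁱ − bⁱ dpᵢ − c dz on T*M × ℝ at pt, on v. -/
def etaCot (n : ℕ) (pt v : CotExt n) : ℝ :=
  v.2.2 - (∑ i, pt.2.1.1 i * v.1.1 i) - (∑ i, pt.2.1.2.1 i * v.1.2.1 i)
    - pt.2.1.2.2 * v.1.2.2

/-- The map β^c : (qⁱ, pᵢ, z, q̇ⁱ, ṗᵢ, ż, u) ↦ (qⁱ, pᵢ, z, u pᵢ + ṗᵢ, −q̇ⁱ, −u, ż − pᵢ q̇ⁱ). -/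
def betaC (n : ℕ) (pt : TanExt n) : CotExt n :=
  (pt.1,
   (fun i => pt.2.2 * pt.1.2.1 i + pt.2.1.2.1 i,
    fun i => -pt.2.1.1 i,
    -pt.2.2),
   pt.2.1.2.2 - ∑ i, pt.1.2.1 i * pt.2.1.1 i)

section aux
open ContinuousLinearMap

variable (n : ℕ)

def π1 : TanExt n →L[ℝ] Pt n := fst ℝ (Pt n) (Pt n × ℝ)
def π2 : TanExt n →L[ℝ] Pt n := (fst ℝ (Pt n) ℝ).comp (snd ℝ (Pt n) (Pt n × ℝ))
def πu : TanExt n →L[ℝ] ℝ := (snd ℝ (Pt n) ℝ).comp (snd ℝ (Pt n) (Pt n × ℝ))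
def pA : Pt n →L[ℝ] (Fin n → ℝ) := fst ℝ (Fin n → ℝ) ((Fin n → ℝ) × ℝ)
def pB : Pt n →L[ℝ] (Fin n → ℝ) :=
  (fst ℝ (Fin n → ℝ) ℝ).comp (snd ℝ (Fin n → ℝ) ((Fin n → ℝ) × ℝ))
def pC : Pt n →L[ℝ] ℝ :=
  (snd ℝ (Fin n → ℝ) ℝ).comp (snd ℝ (Fin n → ℝ) ((Fin n → ℝ) × ℝ))

def πq : TanExt n →L[ℝ] (Fin n → ℝ) := (pA n).comp (π1 n)
def πp : TanExt n →L[ℝ] (Fin n → ℝ) := (pB n).comp (π1 n)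
def πqd : TanExt n →L[ℝ] (Fin n → ℝ) := (pA n).comp (π2 n)
def πpd : TanExt n →L[ℝ] (Fin n → ℝ) := (pB n).comp (π2 n)
def πzd : TanExt n →L[ℝ] ℝ := (pC n).comp (π2 n)

def Dmap (pt : TanExt n) : TanExt n →L[ℝ] CotExt n :=
  (π1 n).prod
    (((ContinuousLinearMap.pi fun i =>
        pt.2.2 • ((proj i).comp (πp n)) + pt.1.2.1 i • (πu n)
          + (proj i).comp (πpd n))).prod
      (((ContinuousLinearMap.pi fun i => -((proj i).comp (πqd n)))).prod
        (-(πu n))) |>.prod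
      ((πzd n) - ∑ i,
        (pt.1.2.1 i • ((proj i).comp (πqd n)) + pt.2.1.1 i • ((proj i).comp (πp n)))))

lemma betaC_hasFDerivAt (pt : TanExt n) :
    HasFDerivAt (betaC n) (Dmap n pt) pt := by
  have hu : HasFDerivAt (fun x : TanExt n => x.2.2) (πu n) pt := (πu n).hasFDerivAt
  have hzd : HasFDerivAt (fun x : TanExt n => x.2.1.2.2) (πzd n) pt := (πzd n).hasFDerivAt
  have hp : ∀ i, HasFDerivAt (fun x : TanExt n => x.1.2.1 i)
      ((proj i).comp (πp n)) pt := fun i => ((proj i).comp (πp n)).hasFDerivAt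
  have hqd : ∀ i, HasFDerivAt (fun x : TanExt n => x.2.1.1 i)
      ((proj i).comp (πqd n)) pt := fun i => ((proj i).comp (πqd n)).hasFDerivAt
  have hpd : ∀ i, HasFDerivAt (fun x : TanExt n => x.2.1.2.1 i)
      ((proj i).comp (πpd n)) pt := fun i => ((proj i).comp (πpd n)).hasFDerivAt
  have h1 : HasFDerivAt (fun x : TanExt n => x.1) (π1 n) pt := (π1 n).hasFDerivAt
  have hB1 : HasFDerivAt (fun (x : TanExt n) (i : Fin n) => x.2.2 * x.1.2.1 i + x.2.1.2.1 i)
      (ContinuousLinearMap.pi fun i =>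
        pt.2.2 • ((proj i).comp (πp n)) + pt.1.2.1 i • (πu n) + (proj i).comp (πpd n)) pt :=
    hasFDerivAt_pi.2 fun i => (hu.mul (hp i)).add (hpd i)
  have hB2 : HasFDerivAt (fun (x : TanExt n) (i : Fin n) => -x.2.1.1 i)
      (ContinuousLinearMap.pi fun i => -((proj i).comp (πqd n))) pt :=
    hasFDerivAt_pi.2 fun i => (hqd i).neg
  have hB3 : HasFDerivAt (fun x : TanExt n => -x.2.2) (-(πu n)) pt := hu.neg
  have hC : HasFDerivAt (fun x : TanExt n => x.2.1.2.2 - ∑ i, x.1.2.1 i * x.2.1.1 i)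
      ((πzd n) - ∑ i,
        (pt.1.2.1 i • ((proj i).comp (πqd n)) + pt.2.1.1 i • ((proj i).comp (πp n)))) pt :=
    hzd.sub (HasFDerivAt.fun_sum fun i _ => (hp i).mul (hqd i))
  exact h1.prodMk ((hB1.prodMk (hB2.prodMk hB3)).prodMk hC)

end aux


/-- (β^c)* η_{T*M} = η^T, i.e. η_{T*M} at β^c(pt) evaluated on Dβ^c(v)
equals η^T at pt on v; moreover β^c is a bijection, hence a strict contact
diffeomorphism. -/
theorem betaC_strict_contact (n : ℕ) :
    (∀ pt v : TanExt n,
      etaCot n (betaC n pt) (fderiv ℝ (betaC n) pt v) = etaTan n pt v) ∧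
    Function.Bijective (betaC n) := by
  constructor
  · intro pt v
    rw [(betaC_hasFDerivAt n pt).fderiv]
    simp only [etaCot, etaTan, betaC, Dmap, πq, πp, πqd, πpd, πzd, πu, π1, π2, pA, pB, pC,
      ContinuousLinearMap.prod_apply, ContinuousLinearMap.pi_apply,
      ContinuousLinearMap.add_apply, ContinuousLinearMap.smul_apply,
      ContinuousLinearMap.comp_apply, ContinuousLinearMap.proj_apply,
      ContinuousLinearMap.neg_apply, ContinuousLinearMap.sub_apply,
      ContinuousLinearMap.sum_apply, ContinuousLinearMap.coe_fst',
      ContinuousLinearMap.coe_snd', smul_eq_mul]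
    rw [Finset.sum_add_distrib]
    simp only [neg_mul, Finset.sum_neg_distrib]
    rw [show ∑ x : Fin n, (pt.2.2 * pt.1.2.1 x + pt.2.1.2.1 x) * v.1.1 x
        = ∑ x : Fin n, (pt.2.1.2.1 x + pt.2.2 * pt.1.2.1 x) * v.1.1 x from
      Finset.sum_congr rfl fun i _ => by ring]
    ring
  · rw [Function.bijective_iff_has_inverse]
    refine ⟨fun pt => (pt.1, (fun i => -pt.2.1.2.1 i,
      fun i => pt.2.1.1 i + pt.2.1.2.2 * pt.1.2.1 i,
      pt.2.2 - ∑ i, pt.1.2.1 i * pt.2.1.2.1 i), -pt.2.1.2.2), ?_, ?_⟩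
    · intro pt
      simp only [betaC]
      ext <;> simp
    · intro pt
      simp only [betaC]
      ext <;> simp
end
end

section
/- For a contact manifold (M, η), the one-form η^T = u η^V + η^C on TM × ℝ is a contact form, where η^V and η^C are the vertical and complete lifts of η to TM (pulled back to TM × ℝ) and u is the ℝ-coordinate; its Reeb field in Darboux-induced coordinates is ∂/∂ż. -/
noncomputable section

/-- The exterior derivative d(η^T), evaluated at pt on (v, w). -/
def dEtaTan (n : ℕ) (pt v w : TanExt n) : ℝ :=
  fderiv ℝ (fun y => etaTan n y w) pt v - fderiv ℝ (fun y => etaTan n y v) pt w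

/-- The vector field ∂/∂ż on TM × ℝ. -/
def bzdot (n : ℕ) : TanExt n := (0, (0, 0, 1), 0)

-- coordinate CLMs
def uCLM (n : ℕ) : TanExt n →L[ℝ] ℝ :=
  (ContinuousLinearMap.snd ℝ (Pt n) ℝ).comp (ContinuousLinearMap.snd ℝ (Pt n) (Pt n × ℝ))

def pCLM (n : ℕ) (i : Fin n) : TanExt n →L[ℝ] ℝ :=
  (ContinuousLinearMap.proj i).comp
    ((ContinuousLinearMap.fst ℝ (Fin n → ℝ) ℝ).comp
      ((ContinuousLinearMap.snd ℝ (Fin n → ℝ) ((Fin n → ℝ) × ℝ)).comp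
        (ContinuousLinearMap.fst ℝ (Pt n) (Pt n × ℝ))))

def pdCLM (n : ℕ) (i : Fin n) : TanExt n →L[ℝ] ℝ :=
  (ContinuousLinearMap.proj i).comp
    ((ContinuousLinearMap.fst ℝ (Fin n → ℝ) ℝ).comp
      ((ContinuousLinearMap.snd ℝ (Fin n → ℝ) ((Fin n → ℝ) × ℝ)).comp
        ((ContinuousLinearMap.fst ℝ (Pt n) ℝ).comp
          (ContinuousLinearMap.snd ℝ (Pt n) (Pt n × ℝ)))))

lemma fderiv_etaTan_apply (n : ℕ) (pt w v : TanExt n) :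
    fderiv ℝ (fun y => etaTan n y w) pt v =
      v.2.2 * w.1.2.2
        - (∑ i, (v.2.1.2.1 i + (v.2.2 * pt.1.2.1 i + pt.2.2 * v.1.2.1 i)) * w.1.1 i)
        - ∑ i, v.1.2.1 i * w.2.1.1 i := by
  have hu : HasFDerivAt (fun y : TanExt n => y.2.2) (uCLM n) pt := (uCLM n).hasFDerivAt
  have hp : ∀ i, HasFDerivAt (fun y : TanExt n => y.1.2.1 i) (pCLM n i) pt :=
    fun i => (pCLM n i).hasFDerivAt
  have hpd : ∀ i, HasFDerivAt (fun y : TanExt n => y.2.1.2.1 i) (pdCLM n i) pt :=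
    fun i => (pdCLM n i).hasFDerivAt
  have h1 : HasFDerivAt (fun y : TanExt n => y.2.2 * w.1.2.2) (w.1.2.2 • uCLM n) pt :=
    hu.mul_const _
  have hsum1 : HasFDerivAt
      (fun y : TanExt n => ∑ i, (y.2.1.2.1 i + y.2.2 * y.1.2.1 i) * w.1.1 i)
      (∑ i, w.1.1 i • (pdCLM n i + (pt.2.2 • pCLM n i + pt.1.2.1 i • uCLM n))) pt :=
    HasFDerivAt.fun_sum fun i _ => ((hpd i).add (hu.mul (hp i))).mul_const _
  have hsum2 : HasFDerivAt (fun y : TanExt n => ∑ i, y.1.2.1 i * w.2.1.1 i)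
      (∑ i, w.2.1.1 i • pCLM n i) pt :=
    HasFDerivAt.fun_sum fun i _ => (hp i).mul_const _
  have htot : HasFDerivAt (fun y => etaTan n y w)
      (((0 : TanExt n →L[ℝ] ℝ) + w.1.2.2 • uCLM n)
        - (∑ i, w.1.1 i • (pdCLM n i + (pt.2.2 • pCLM n i + pt.1.2.1 i • uCLM n)))
        - ∑ i, w.2.1.1 i • pCLM n i) pt := by
    simp only [etaTan]
    exact (((hasFDerivAt_const _ _).add h1).sub hsum1).sub hsum2
  rw [htot.fderiv]
  simp only [ContinuousLinearMap.coe_sub', ContinuousLinearMap.coe_add', Pi.sub_apply,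
    Pi.add_apply, ContinuousLinearMap.zero_apply, ContinuousLinearMap.coe_sum', Finset.sum_apply,
    ContinuousLinearMap.coe_smul', Pi.smul_apply, ContinuousLinearMap.add_apply,
    ContinuousLinearMap.smul_apply, smul_eq_mul, uCLM, pCLM, pdCLM,
    ContinuousLinearMap.coe_comp', Function.comp_apply, ContinuousLinearMap.coe_fst',
    ContinuousLinearMap.coe_snd', ContinuousLinearMap.proj_apply]
  ring_nf
  have e1 : (∑ x, (v.2.2 * w.1.1 x * pt.1.2.1 x + w.1.1 x * v.2.1.2.1 x
        + w.1.1 x * pt.2.2 * v.1.2.1 x))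
      = ∑ x, (v.2.1.2.1 x + v.2.2 * pt.1.2.1 x + pt.2.2 * v.1.2.1 x) * w.1.1 x :=
    Finset.sum_congr rfl fun i _ => by ring
  have e2 : (∑ x, w.2.1.1 x * v.1.2.1 x) = ∑ i, v.1.2.1 i * w.2.1.1 i :=
    Finset.sum_congr rfl fun i _ => by ring
  rw [e1, e2]
  ring_nf
  rw [sub_right_comm]
  congr 1
  exact Finset.sum_congr rfl fun i _ => by ring

lemma dEtaTan_eq (n : ℕ) (pt v w : TanExt n) :
    dEtaTan n pt v w =
      (v.2.2 * w.1.2.2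
        - (∑ i, (v.2.1.2.1 i + (v.2.2 * pt.1.2.1 i + pt.2.2 * v.1.2.1 i)) * w.1.1 i)
        - ∑ i, v.1.2.1 i * w.2.1.1 i)
      - (w.2.2 * v.1.2.2
        - (∑ i, (w.2.1.2.1 i + (w.2.2 * pt.1.2.1 i + pt.2.2 * w.1.2.1 i)) * v.1.1 i)
        - ∑ i, w.1.2.1 i * v.2.1.1 i) := by
  rw [dEtaTan, fderiv_etaTan_apply, fderiv_etaTan_apply]

lemma key (n : ℕ) (pt v : TanExt n) (h : ∀ w, dEtaTan n pt v w = 0) :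
    v.2.2 = 0 ∧ v.1.2.1 = 0 ∧ v.2.1.2.1 = 0 ∧ v.1.1 = 0 ∧ v.2.1.1 = 0 ∧ v.1.2.2 = 0 := by
  have hα : v.2.2 = 0 := by
    have := h ((0, 0, 1), 0, 0)
    rw [dEtaTan_eq] at this
    simpa using this
  have hb : v.1.2.1 = 0 := by
    funext j
    have := h (0, (Pi.single j 1, 0, 0), 0)
    rw [dEtaTan_eq] at this
    simpa [Pi.single_apply, mul_ite, Finset.sum_ite_eq'] using this
  have ha : v.1.1 = 0 := by
    funext j
    have := h (0, (0, Pi.single j 1, 0), 0)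
    rw [dEtaTan_eq] at this
    simpa [Pi.single_apply, ite_mul, Finset.sum_ite_eq'] using this
  have hbd : v.2.1.2.1 = 0 := by
    funext j
    have := h ((Pi.single j 1, 0, 0), 0, 0)
    rw [dEtaTan_eq] at this
    simpa [hα, hb, Pi.single_apply, mul_ite, Finset.sum_ite_eq'] using this
  have had : v.2.1.1 = 0 := by
    funext j
    have := h ((0, Pi.single j 1, 0), 0, 0)
    rw [dEtaTan_eq] at this
    simpa [ha, Pi.single_apply, ite_mul, mul_ite, Finset.sum_ite_eq'] using this
  have hc : v.1.2.2 = 0 := by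
    have := h (0, 0, 1)
    rw [dEtaTan_eq] at this
    simpa [ha] using this
  exact ⟨hα, hb, hbd, ha, had, hc⟩

/-- η^T = u η^V + η^C is a contact form on TM × ℝ, with Reeb field ∂/∂ż
(verified in Darboux coordinates): ∂/∂ż satisfies the Reeb conditions, it is the unique
such vector, and η^T is nondegenerate in the contact sense (ker η^T ∩ ker dη^T = 0 at
every point). -/
theorem etaTan_is_contact_with_reeb (n : ℕ) (pt : TanExt n) :
    etaTan n pt (bzdot n) = 1 ∧
    (∀ w, dEtaTan n pt (bzdot n) w = 0) ∧
    (∀ v, etaTan n pt v = 0 → (∀ w, dEtaTan n pt v w = 0) → v = 0) ∧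
    (∀ R : TanExt n, etaTan n pt R = 1 → (∀ w, dEtaTan n pt R w = 0) → R = bzdot n) := by
  
  refine ⟨by simp [etaTan, bzdot], fun w => by rw [dEtaTan_eq]; simp [bzdot], ?_, ?_⟩
  · intro v h0 h
    obtain ⟨hα, hb, hbd, ha, had, hc⟩ := key n pt v h
    have hcd : v.2.1.2.2 = 0 := by
      rw [etaTan] at h0
      simpa [hα, hb, hbd, ha, had, hc] using h0
    ext <;> simp_all
  · intro R h0 h
    obtain ⟨hα, hb, hbd, ha, had, hc⟩ := key n pt R h
    have hcd : R.2.1.2.2 = 1 := by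
      rw [etaTan] at h0
      simpa [hα, hb, hbd, ha, had, hc] using h0
    ext <;> simp_all [bzdot]
end
end

section
/- Let (M, η) be a contact manifold and j : HM × ℝ ↪ TM × ℝ the inclusion of the horizontal subbundle HM = ker η. Then ω_η := d(j* η^T) is a symplectic form on HM × ℝ. -/
noncomputable section

/-- HM × ℝ, parametrized by (q, p, z, q̇, ṗ, u); the horizontal subbundle HM = ker η
consists of those tangent vectors with ż = pᵢ q̇ⁱ. -/
abbrev HorExt (n : ℕ) := Pt n × (Fin n → ℝ) × (Fin n → ℝ) × ℝ

/-- The inclusion j : HM × ℝ ↪ TM × ℝ, (q,p,z,q̇,ṗ,u) ↦ (q,p,z,q̇,ṗ, pᵢ q̇ⁱ, u). -/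
def jHor (n : ℕ) (c : HorExt n) : TanExt n :=
  (c.1, (c.2.1, c.2.2.1, ∑ i, c.1.2.1 i * c.2.1 i), c.2.2.2)

/-- The one-form θ_η = j* η^T on HM × ℝ. -/
def thetaEta (n : ℕ) (c w : HorExt n) : ℝ :=
  etaTan n (jHor n c) (fderiv ℝ (jHor n) c w)

/-- The two-form ω_η = d θ_η = d(j* η^T) on HM × ℝ. -/
def omegaEta (n : ℕ) (c v w : HorExt n) : ℝ :=
  fderiv ℝ (fun y => thetaEta n y w) c v - fderiv ℝ (fun y => thetaEta n y v) c w

-- coordinate CLMs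
def Lq (n : ℕ) (i : Fin n) : HorExt n →L[ℝ] ℝ :=
  (ContinuousLinearMap.proj i).comp (ContinuousLinearMap.fst ℝ _ _ |>.comp (ContinuousLinearMap.fst ℝ _ _))
def Lp (n : ℕ) (i : Fin n) : HorExt n →L[ℝ] ℝ :=
  (ContinuousLinearMap.proj i).comp ((ContinuousLinearMap.fst ℝ _ _).comp
    ((ContinuousLinearMap.snd ℝ _ _).comp (ContinuousLinearMap.fst ℝ _ _)))
def Lqd (n : ℕ) (i : Fin n) : HorExt n →L[ℝ] ℝ :=
  (ContinuousLinearMap.proj i).comp ((ContinuousLinearMap.fst ℝ _ _).comp (ContinuousLinearMap.snd ℝ _ _))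
def Lpd (n : ℕ) (i : Fin n) : HorExt n →L[ℝ] ℝ :=
  (ContinuousLinearMap.proj i).comp ((ContinuousLinearMap.fst ℝ _ _).comp
    ((ContinuousLinearMap.snd ℝ _ _).comp (ContinuousLinearMap.snd ℝ _ _)))
def Lu (n : ℕ) : HorExt n →L[ℝ] ℝ :=
  (ContinuousLinearMap.snd ℝ _ _).comp ((ContinuousLinearMap.snd ℝ _ _).comp (ContinuousLinearMap.snd ℝ _ _))

example (n : ℕ) (i : Fin n) (c : HorExt n) : Lq n i c = c.1.1 i := rfl
example (n : ℕ) (i : Fin n) (c : HorExt n) : Lqd n i c = c.2.1 i := rfl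
example (n : ℕ) (i : Fin n) (c : HorExt n) : Lpd n i c = c.2.2.1 i := rfl
example (n : ℕ) (c : HorExt n) : Lu n c = c.2.2.2 := rfl

lemma hasFDerivAt_jHor (n : ℕ) (c : HorExt n) :
    HasFDerivAt (jHor n) ((ContinuousLinearMap.fst ℝ _ _).prod
      ((((ContinuousLinearMap.fst ℝ _ _).comp (ContinuousLinearMap.snd ℝ _ _)).prod
        (((ContinuousLinearMap.fst ℝ _ _).comp ((ContinuousLinearMap.snd ℝ _ _).comp (ContinuousLinearMap.snd ℝ _ _))).prod
          (∑ i, (c.1.2.1 i • Lqd n i + c.2.1 i • Lp n i)))).prod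
        ((ContinuousLinearMap.snd ℝ _ _).comp ((ContinuousLinearMap.snd ℝ _ _).comp (ContinuousLinearMap.snd ℝ _ _))))) c := by
  have hdot : HasFDerivAt (fun c : HorExt n => ∑ i, c.1.2.1 i * c.2.1 i)
      (∑ i, (c.1.2.1 i • Lqd n i + c.2.1 i • Lp n i)) c := by
    refine HasFDerivAt.fun_sum (fun i _ => ?_)
    exact (Lp n i).hasFDerivAt.mul (Lqd n i).hasFDerivAt
  exact HasFDerivAt.prodMk hasFDerivAt_fst
    (((((ContinuousLinearMap.fst ℝ _ _).comp (ContinuousLinearMap.snd ℝ _ _)).hasFDerivAt).prodMk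
      ((((ContinuousLinearMap.fst ℝ _ _).comp ((ContinuousLinearMap.snd ℝ _ _).comp (ContinuousLinearMap.snd ℝ _ _))).hasFDerivAt).prodMk hdot)).prodMk
      (by exact (((ContinuousLinearMap.snd ℝ _ _).comp ((ContinuousLinearMap.snd ℝ _ _).comp (ContinuousLinearMap.snd ℝ _ _)) : HorExt n →L[ℝ] ℝ)).hasFDerivAt))

lemma fderiv_jHor_apply (n : ℕ) (c w : HorExt n) :
    fderiv ℝ (jHor n) c w =
      (w.1, (w.2.1, w.2.2.1, ∑ i, (c.1.2.1 i * w.2.1 i + w.1.2.1 i * c.2.1 i)), w.2.2.2) := by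
  rw [(hasFDerivAt_jHor n c).fderiv]
  simp [Lqd, Lp, mul_comm]

lemma thetaEta_eq (n : ℕ) (c w : HorExt n) :
    thetaEta n c w = (∑ i, w.1.2.1 i * c.2.1 i) + c.2.2.2 * w.1.2.2
      - ∑ i, (c.2.2.1 i + c.2.2.2 * c.1.2.1 i) * w.1.1 i := by
  unfold thetaEta etaTan
  rw [fderiv_jHor_apply]
  simp [jHor, Finset.sum_add_distrib]
  ring

lemma fderiv_theta_apply (n : ℕ) (c w v : HorExt n) :
    fderiv ℝ (fun y => thetaEta n y w) c v =
      (∑ i, w.1.2.1 i * v.2.1 i) + v.2.2.2 * w.1.2.2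
      - ∑ i, (v.2.2.1 i + v.2.2.2 * c.1.2.1 i + c.2.2.2 * v.1.2.1 i) * w.1.1 i := by
  have hfun : (fun y => thetaEta n y w) = fun y : HorExt n =>
      (∑ i, w.1.2.1 i * y.2.1 i) + y.2.2.2 * w.1.2.2
      - ∑ i, (y.2.2.1 i + y.2.2.2 * y.1.2.1 i) * w.1.1 i :=
    funext fun y => thetaEta_eq n y w
  rw [hfun]
  have h : HasFDerivAt (fun y : HorExt n =>
      (∑ i, w.1.2.1 i * y.2.1 i) + y.2.2.2 * w.1.2.2
      - ∑ i, (y.2.2.1 i + y.2.2.2 * y.1.2.1 i) * w.1.1 i)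
      ((∑ i, w.1.2.1 i • Lqd n i) + w.1.2.2 • Lu n
        - ∑ i, w.1.1 i • (Lpd n i + (c.2.2.2 • Lp n i + c.1.2.1 i • Lu n))) c := by
    refine HasFDerivAt.sub (HasFDerivAt.add ?_ ?_) ?_
    · exact HasFDerivAt.fun_sum (fun i _ => (Lqd n i).hasFDerivAt.const_mul _)
    · exact (Lu n).hasFDerivAt.mul_const _
    · exact HasFDerivAt.fun_sum (fun i _ =>
        ((Lpd n i).hasFDerivAt.add ((Lu n).hasFDerivAt.mul (Lp n i).hasFDerivAt)).mul_const _)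
  rw [h.fderiv]
  simp [Lqd, Lu, Lpd, Lp, Finset.sum_add_distrib, add_mul, mul_comm, mul_left_comm]
  rw [← Finset.sum_add_distrib, ← Finset.sum_add_distrib]
  exact Finset.sum_congr rfl fun i _ => by ring

lemma omegaEta_eq (n : ℕ) (c v w : HorExt n) :
    omegaEta n c v w =
      ((∑ i, w.1.2.1 i * v.2.1 i) + v.2.2.2 * w.1.2.2
        - ∑ i, (v.2.2.1 i + v.2.2.2 * c.1.2.1 i + c.2.2.2 * v.1.2.1 i) * w.1.1 i)
      - ((∑ i, v.1.2.1 i * w.2.1 i) + w.2.2.2 * v.1.2.2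
        - ∑ i, (w.2.2.1 i + w.2.2.2 * c.1.2.1 i + c.2.2.2 * w.1.2.1 i) * v.1.1 i) := by
  unfold omegaEta
  rw [fderiv_theta_apply, fderiv_theta_apply]

/-- ω_η = d(j* η^T) is a symplectic form on HM × ℝ: it is antisymmetric
(and exact, hence closed, by construction) and nondegenerate at every point. -/
theorem omegaEta_symplectic (n : ℕ) (c : HorExt n) :
    (∀ v w, omegaEta n c v w = -omegaEta n c w v) ∧
    (∀ v, (∀ w, omegaEta n c v w = 0) → v = 0) := by
  constructor
  · intro v w
    rw [omegaEta_eq, omegaEta_eq]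
    ring
  · rintro ⟨⟨vq, vp, vz⟩, vqd, vpd, vu⟩ hv
    simp only [omegaEta_eq] at hv
    have hu : vu = 0 := by simpa using hv ((0, 0, 1), 0, 0, 0)
    have hvp : ∀ j, vp j = 0 := by
      intro j
      have := hv (0, Pi.single j 1, 0, 0)
      simpa [Pi.single_apply, mul_ite, Finset.sum_ite_eq'] using this
    have hvq : ∀ j, vq j = 0 := by
      intro j
      have := hv (0, 0, Pi.single j 1, 0)
      simpa [Pi.single_apply, ite_mul, Finset.sum_ite_eq'] using this
    have hvqd : ∀ j, vqd j = 0 := by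
      intro j
      have := hv ((0, Pi.single j 1, 0), 0, 0, 0)
      simpa [Pi.single_apply, ite_mul, mul_ite, Finset.sum_ite_eq', hvq] using this
    have hvpd : ∀ j, vpd j = 0 := by
      intro j
      have := hv ((Pi.single j 1, 0, 0), 0, 0, 0)
      simpa [Pi.single_apply, ite_mul, mul_ite, Finset.sum_ite_eq', hu, hvp] using this
    have hvz : vz = 0 := by
      have := hv (0, 0, 0, 1)
      simpa [hvq] using this
    simp only [Prod.ext_iff, Prod.fst_zero, Prod.snd_zero, funext_iff, Pi.zero_apply]
    exact ⟨⟨hvq, hvp, hvz⟩, hvqd, hvpd, hu⟩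
end
end
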